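/- arXiv:1409.0476 — 3 statements merged into one kernel-verified Lean document; each statement's English description precedes it below -/
import Mathlib

section
/- Let L be a bounded, self-adjoint, nonnegative operator on a Hilbert space H satisfying the spectral gap condition ⟨f, Lf⟩ ≥ σ₀ ‖f‖² for all f orthogonal to ker L, with σ₀ > 0, and let P be the orthogonal projection onto ker L. Let g : [0,∞) → H be continuous with ‖g(τ)‖ ≤ C e^{−στ} for some constants C, σ > 0. Then there exists an initial datum φ₁ ∈ H such that the unique continuously differentiable solution f : [0,∞) → H of f′(τ) + L f(τ) = g(τ), f(0) = φ₁, satisfies f(τ) → 0 in H as τ → ∞; indeed, the solution tends to 0 at infinity if and only if P φ₁ = −∫₀^∞ P g(τ) dτ. -/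
/-!
Since `L` is self-adjoint, `P` annihilates the range of `L`, so the kernel component of a solution
obeys `(P f)' = P g` and `P f(τ) → P φ₁ + ∫₀^∞ P g`. The remaining component `q = f - P f` stays
orthogonal to `ker L`, where the spectral gap turns the energy identity for `u = ‖q‖²` into
`u' ≤ -σ₀ u + K e^{-2στ}`; the Lyapunov function `e^{σ₀τ} u - c e^{(σ₀-b)τ}` (for some
`0 < b < σ₀` with `b ≤ 2σ`) is then nonincreasing, so `q → 0`. Hence `f → 0` iff
`P φ₁ = -∫₀^∞ P g`, and Duhamel's formula
`f(τ) = e^{-τL} (φ₁ + ∫₀^τ e^{sL} g(s) ds)` provides a solution with this initial datum.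
-/

open Real RealInnerProductSpace MeasureTheory Filter Set

theorem hasDerivAt_duhamel {E : Type*} [NormedAddCommGroup E] [NormedSpace ℝ E] [CompleteSpace E]
    (A : E →L[ℝ] E) {g : ℝ → E} (hg : Continuous g) (x : E) (τ : ℝ) :
    HasDerivAt
      (fun t => NormedSpace.exp (t • -A) (x + ∫ s in (0:ℝ)..t, NormedSpace.exp (s • A) (g s)))
      (g τ - A (NormedSpace.exp (τ • -A) (x + ∫ s in (0:ℝ)..τ, NormedSpace.exp (s • A) (g s))))
      τ := by
  let : NormedAlgebra ℚ (E →L[ℝ] E) := .restrictScalars ℚ ℝ (E →L[ℝ] E)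
  have hint : Continuous fun s : ℝ => NormedSpace.exp (s • A) (g s) :=
    (NormedSpace.exp_continuous.comp (continuous_id.smul continuous_const)).clm_apply hg
  have hy : HasDerivAt (fun t => x + ∫ s in (0:ℝ)..t, NormedSpace.exp (s • A) (g s))
      (NormedSpace.exp (τ • A) (g τ)) τ :=
    (intervalIntegral.integral_hasDerivAt_right (hint.intervalIntegrable _ _)
      hint.aestronglyMeasurable.stronglyMeasurableAtFilter hint.continuousAt).const_add x
  have hinv : NormedSpace.exp (τ • -A) (NormedSpace.exp (τ • A) (g τ)) = g τ := by
    rw [← mul_apply_eq_comp, ← NormedSpace.exp_add_of_commute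
      (((Commute.refl A).neg_left.smul_left τ).smul_right τ), smul_neg, neg_add_cancel,
      NormedSpace.exp_zero, one_apply_eq_self]
  convert (hasDerivAt_exp_smul_const' (-A) τ).clm_apply hy using 1
  rw [hinv, sub_eq_neg_add]
  rfl

theorem tendsto_exp_neg_mul_atTop {b : ℝ} (hb : 0 < b) :
    Tendsto (fun τ => exp (-b * τ)) atTop (nhds 0) :=
  tendsto_exp_atBot.comp (tendsto_id.const_mul_atTop_of_neg (neg_lt_zero.2 hb))

theorem le_of_deriv_le_neg_mul_add_exp {u u' : ℝ → ℝ} {a b K : ℝ} (hab : b < a)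
    (hu : ∀ τ, 0 ≤ τ → HasDerivWithinAt u (u' τ) (Ici 0) τ)
    (hu' : ∀ τ, 0 ≤ τ → u' τ ≤ -a * u τ + K * exp (-b * τ)) {τ : ℝ} (hτ : 0 ≤ τ) :
    u τ ≤ exp (-a * τ) * (u 0 - K / (a - b)) + K / (a - b) * exp (-b * τ) := by
  set φ : ℝ → ℝ := fun t => exp (a * t) * u t - K / (a - b) * exp ((a - b) * t)
  have hφ : ∀ t, 0 ≤ t →
      HasDerivWithinAt φ (exp (a * t) * (a * u t + u' t) - K * exp ((a - b) * t)) (Ici 0) t := by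
    intro t ht
    have hexp : ∀ c, HasDerivAt (fun t => exp (c * t)) (c * exp (c * t)) t := fun c => by
      simpa [mul_comm] using ((hasDerivAt_id t).const_mul c).exp
    refine (((hexp a).hasDerivWithinAt.mul (hu t ht)).sub
      ((hexp (a - b)).const_mul (K / (a - b))).hasDerivWithinAt).congr_deriv ?_
    field_simp [(sub_pos.2 hab).ne']
  have hφ_anti : AntitoneOn φ (Ici 0) := by
    refine antitoneOn_of_hasDerivWithinAt_nonpos (convex_Ici 0)
      (f' := fun t => exp (a * t) * (a * u t + u' t) - K * exp ((a - b) * t))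
      (fun t ht => (hφ t ht).continuousWithinAt) (fun t ht => ?_) (fun t ht => ?_)
    · rw [interior_Ici] at ht
      exact (hφ t ht.le).mono interior_subset
    · rw [interior_Ici] at ht
      have hsplit : exp ((a - b) * t) = exp (a * t) * exp (-b * t) := by rw [← exp_add]; ring_nf
      have := mul_le_mul_of_nonneg_left (hu' t ht.le) (exp_pos (a * t)).le
      rw [hsplit]
      nlinarith
  have hle : φ τ ≤ φ 0 := hφ_anti self_mem_Ici hτ hτ
  have hsplit : exp (-b * τ) = exp (-a * τ) * exp ((a - b) * τ) := by rw [← exp_add]; ring_nf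
  have hinv : exp (-a * τ) * exp (a * τ) = 1 := by rw [← exp_add]; simp
  simp only [φ, mul_zero, exp_zero, one_mul] at hle
  calc u τ = exp (-a * τ) * (exp (a * τ) * u τ) := by rw [← mul_assoc, hinv, one_mul]
    _ ≤ exp (-a * τ) * (u 0 - K / (a - b) + K / (a - b) * exp ((a - b) * τ)) := by
        gcongr; linarith
    _ = _ := by rw [hsplit]; ring

theorem tendsto_zero_of_deriv_le_neg_mul_add_exp {u u' : ℝ → ℝ} {a b K : ℝ} (ha : 0 < a)
    (hb : 0 < b) (hK : 0 ≤ K) (hu_nonneg : ∀ τ, 0 ≤ u τ)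
    (hu : ∀ τ, 0 ≤ τ → HasDerivWithinAt u (u' τ) (Ici 0) τ)
    (hu' : ∀ τ, 0 ≤ τ → u' τ ≤ -a * u τ + K * exp (-b * τ)) :
    Tendsto u atTop (nhds 0) := by
  -- Lowering `b` keeps the hypothesis (as `K ≥ 0`) and provides the gap `b < a`.
  set b' := min b (a / 2)
  have hb' : 0 < b' := lt_min hb (half_pos ha)
  have hb'a : b' < a := (min_le_right _ _).trans_lt (half_lt_self ha)
  have hu'' : ∀ τ, 0 ≤ τ → u' τ ≤ -a * u τ + K * exp (-b' * τ) := fun τ hτ =>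
    (hu' τ hτ).trans (by gcongr; exact min_le_left _ _)
  have hbound : Tendsto
      (fun τ => exp (-a * τ) * (u 0 - K / (a - b')) + K / (a - b') * exp (-b' * τ))
      atTop (nhds 0) := by
    simpa using ((tendsto_exp_neg_mul_atTop ha).mul_const _).add
      ((tendsto_exp_neg_mul_atTop hb').const_mul (K / (a - b')))
  exact tendsto_of_tendsto_of_tendsto_of_le_of_le' tendsto_const_nhds hbound
    (Eventually.of_forall hu_nonneg)
    ((eventually_ge_atTop 0).mono fun τ hτ => le_of_deriv_le_neg_mul_add_exp hb'a hu hu'' hτ)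

theorem tendsto_zero_of_spectral_gap {H : Type*}
    [NormedAddCommGroup H] [InnerProductSpace ℝ H] (L : H →L[ℝ] H) {σ₀ : ℝ} (hσ₀ : 0 < σ₀)
    (hgap : ∀ f : H, (∀ g : H, L g = 0 → ⟪f, g⟫ = 0) → σ₀ * ‖f‖ ^ 2 ≤ ⟪f, L f⟫)
    {q h : ℝ → H} (hq : ∀ τ, 0 ≤ τ → HasDerivWithinAt q (h τ - L (q τ)) (Ici 0) τ)
    (hq_perp : ∀ τ, 0 ≤ τ → ∀ k : H, L k = 0 → ⟪q τ, k⟫ = 0)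
    {C σ : ℝ} (hσ : 0 < σ) (hh : ∀ τ, 0 ≤ τ → ‖h τ‖ ≤ C * exp (-σ * τ)) :
    Tendsto q atTop (nhds 0) := by
  have henergy : ∀ τ, 0 ≤ τ → 2 * ⟪q τ, h τ - L (q τ)⟫ ≤
      -σ₀ * ‖q τ‖ ^ 2 + C ^ 2 / σ₀ * exp (-(2 * σ) * τ) := by
    intro τ hτ
    have hcoercive := hgap _ (hq_perp τ hτ)
    have hforce : ⟪q τ, h τ⟫ ≤ ‖q τ‖ * (C * exp (-σ * τ)) :=
      (real_inner_le_norm _ _).trans (by gcongr; exact hh τ hτ)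
    have hexp : exp (-(2 * σ) * τ) = exp (-σ * τ) ^ 2 := by rw [← exp_nat_mul]; ring_nf
    have hamgm : 2 * (‖q τ‖ * (C * exp (-σ * τ))) ≤
        σ₀ * ‖q τ‖ ^ 2 + C ^ 2 / σ₀ * exp (-σ * τ) ^ 2 := by
      have hsq : σ₀ * ‖q τ‖ ^ 2 + C ^ 2 / σ₀ * exp (-σ * τ) ^ 2
          - 2 * (‖q τ‖ * (C * exp (-σ * τ))) = (σ₀ * ‖q τ‖ - C * exp (-σ * τ)) ^ 2 / σ₀ := by
        field_simp
        ring
      have : 0 ≤ (σ₀ * ‖q τ‖ - C * exp (-σ * τ)) ^ 2 / σ₀ := by positivity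
      linarith
    rw [inner_sub_right, hexp]
    linarith
  have hnorm_sq := tendsto_zero_of_deriv_le_neg_mul_add_exp hσ₀ (by positivity : 0 < 2 * σ)
    (by positivity : 0 ≤ C ^ 2 / σ₀) (fun τ => sq_nonneg ‖q τ‖)
    (fun τ hτ => (hq τ hτ).norm_sq) henergy
  rw [tendsto_zero_iff_norm_tendsto_zero]
  simpa using hnorm_sq.sqrt

section ProjectionOntoKernel

variable {H : Type*} [NormedAddCommGroup H] [InnerProductSpace ℝ H] {L P : H →L[ℝ] H}

theorem proj_ker_eq_zero_of_forall_inner_eq_zero (hPker : ∀ f : H, L (P f) = 0)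
    (hPorth : ∀ f g : H, L g = 0 → ⟪f - P f, g⟫ = 0) {v : H}
    (hv : ∀ k : H, L k = 0 → ⟪v, k⟫ = 0) : P v = 0 := by
  have h := hPorth v (P v) (hPker v)
  rw [inner_sub_left, hv _ (hPker v), zero_sub, neg_eq_zero] at h
  exact inner_self_eq_zero.mp h

theorem proj_ker_apply_eq_zero [CompleteSpace H] (hL : IsSelfAdjoint L)
    (hPker : ∀ f : H, L (P f) = 0) (hPorth : ∀ f g : H, L g = 0 → ⟪f - P f, g⟫ = 0) (v : H) :
    P (L v) = 0 :=
  proj_ker_eq_zero_of_forall_inner_eq_zero hPker hPorth fun k hk => by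
    simpa [hk] using hL.isSymmetric v k

theorem proj_ker_proj_ker (hPker : ∀ f : H, L (P f) = 0)
    (hPorth : ∀ f g : H, L g = 0 → ⟪f - P f, g⟫ = 0) (v : H) : P (P v) = P v := by
  have h := proj_ker_eq_zero_of_forall_inner_eq_zero hPker hPorth (hPorth v)
  rwa [map_sub, sub_eq_zero, eq_comm] at h

theorem norm_sub_proj_ker_le (hPker : ∀ f : H, L (P f) = 0)
    (hPorth : ∀ f g : H, L g = 0 → ⟪f - P f, g⟫ = 0) (v : H) : ‖v - P v‖ ≤ ‖v‖ := by
  have h := norm_add_sq_eq_norm_sq_add_norm_sq_real (hPorth v (P v) (hPker v))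
  rw [sub_add_cancel] at h
  nlinarith [norm_nonneg v, norm_nonneg (v - P v), mul_self_nonneg ‖P v‖]

end ProjectionOntoKernel

theorem integrableOn_Ici_of_norm_le_exp {E : Type*} [NormedAddCommGroup E] {g : ℝ → E}
    (hg : ContinuousOn g (Ici 0)) {C σ : ℝ} (hσ : 0 < σ)
    (hdecay : ∀ τ, 0 ≤ τ → ‖g τ‖ ≤ C * exp (-σ * τ)) : IntegrableOn g (Ici 0) := by
  refine Integrable.mono' ?_ (hg.aestronglyMeasurable measurableSet_Ici)
    ((ae_restrict_iff' measurableSet_Ici).2 (Eventually.of_forall hdecay))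
  exact (integrableOn_Ici_iff_integrableOn_Ioi (f := fun τ => C * exp (-σ * τ))).2
    ((exp_neg_integrableOn_Ioi 0 hσ).const_mul C)

section ForcedEquation

variable {H : Type*} [NormedAddCommGroup H] [InnerProductSpace ℝ H] [CompleteSpace H]
  {L P : H →L[ℝ] H} {g f : ℝ → H}

theorem proj_ker_solution_eq_add_integral (hL : IsSelfAdjoint L) (hPker : ∀ f : H, L (P f) = 0)
    (hPorth : ∀ f g : H, L g = 0 → ⟪f - P f, g⟫ = 0) (hg : ContinuousOn g (Ici 0))
    (hf : ∀ τ, 0 ≤ τ → HasDerivWithinAt f (g τ - L (f τ)) (Ici 0) τ) {b : ℝ} (hb : 0 ≤ b) :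
    P (f b) = P (f 0) + ∫ s in (0:ℝ)..b, P (g s) := by
  have hderiv : ∀ τ ∈ Ioo 0 b, HasDerivWithinAt (fun t => P (f t)) (P (g τ)) (Ioi τ) τ := by
    intro τ hτ
    have h := P.hasFDerivAt.comp_hasDerivWithinAt τ (hf τ hτ.1.le)
    rw [map_sub, proj_ker_apply_eq_zero hL hPker hPorth, sub_zero] at h
    exact h.mono fun t ht => hτ.1.le.trans (le_of_lt ht)
  have hcont : ContinuousOn (fun t => P (f t)) (Icc 0 b) :=
    P.continuous.comp_continuousOn fun t ht =>
      (hf t ht.1).continuousWithinAt.mono Icc_subset_Ici_self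
  have hint : IntervalIntegrable (fun s => P (g s)) volume 0 b :=
    (P.continuous.comp_continuousOn (hg.mono Icc_subset_Ici_self)).intervalIntegrable_of_Icc hb
  rw [intervalIntegral.integral_eq_sub_of_hasDeriv_right_of_le hb hcont hderiv hint]
  abel

theorem tendsto_sub_proj_ker_solution (hL : IsSelfAdjoint L) {σ₀ : ℝ} (hσ₀ : 0 < σ₀)
    (hgap : ∀ f : H, (∀ g : H, L g = 0 → ⟪f, g⟫ = 0) → σ₀ * ‖f‖ ^ 2 ≤ ⟪f, L f⟫)
    (hPker : ∀ f : H, L (P f) = 0) (hPorth : ∀ f g : H, L g = 0 → ⟪f - P f, g⟫ = 0)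
    {C σ : ℝ} (hσ : 0 < σ) (hdecay : ∀ τ, 0 ≤ τ → ‖g τ‖ ≤ C * exp (-σ * τ))
    (hf : ∀ τ, 0 ≤ τ → HasDerivWithinAt f (g τ - L (f τ)) (Ici 0) τ) :
    Tendsto (fun τ => f τ - P (f τ)) atTop (nhds 0) := by
  refine tendsto_zero_of_spectral_gap L hσ₀ hgap
    (h := fun τ => g τ - P (g τ)) (fun τ hτ => ?_) (fun τ _ => hPorth (f τ)) hσ
    (fun τ hτ => (norm_sub_proj_ker_le hPker hPorth _).trans (hdecay τ hτ))
  have hPf := P.hasFDerivAt.comp_hasDerivWithinAt τ (hf τ hτ)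
  rw [map_sub, proj_ker_apply_eq_zero hL hPker hPorth, sub_zero] at hPf
  refine ((hf τ hτ).sub hPf).congr_deriv ?_
  rw [map_sub, hPker, sub_zero]
  abel

theorem tendsto_solution_iff (hL : IsSelfAdjoint L) {σ₀ : ℝ} (hσ₀ : 0 < σ₀)
    (hgap : ∀ f : H, (∀ g : H, L g = 0 → ⟪f, g⟫ = 0) → σ₀ * ‖f‖ ^ 2 ≤ ⟪f, L f⟫)
    (hPker : ∀ f : H, L (P f) = 0) (hPorth : ∀ f g : H, L g = 0 → ⟪f - P f, g⟫ = 0)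
    (hg : ContinuousOn g (Ici 0)) {C σ : ℝ} (hσ : 0 < σ)
    (hdecay : ∀ τ, 0 ≤ τ → ‖g τ‖ ≤ C * exp (-σ * τ))
    (hf : ∀ τ, 0 ≤ τ → HasDerivWithinAt f (g τ - L (f τ)) (Ici 0) τ) :
    Tendsto f atTop (nhds 0) ↔ P (f 0) = -∫ τ in Ici 0, P (g τ) := by
  have hPg : IntegrableOn (fun τ => P (g τ)) (Ici 0) :=
    P.integrable_comp (integrableOn_Ici_of_norm_le_exp hg hσ hdecay)
  have hlim : Tendsto (fun b => P (f b)) atTop (nhds (P (f 0) + ∫ τ in Ici 0, P (g τ))) := by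
    rw [integral_Ici_eq_integral_Ioi]
    refine (tendsto_const_nhds.add (intervalIntegral_tendsto_integral_Ioi 0
      (hPg.mono_set Ioi_subset_Ici_self) tendsto_id)).congr' ?_
    filter_upwards [eventually_ge_atTop 0] with b hb
    exact (proj_ker_solution_eq_add_integral hL hPker hPorth hg hf hb).symm
  have hq := tendsto_sub_proj_ker_solution hL hσ₀ hgap hPker hPorth hσ hdecay hf
  rw [← add_eq_zero_iff_eq_neg]
  constructor
  · intro hf_lim
    exact tendsto_nhds_unique hlim
      (by simpa [Function.comp_def] using (P.continuous.tendsto 0).comp hf_lim)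
  · intro hsum
    rw [hsum] at hlim
    simpa using hq.add hlim

end ForcedEquation

theorem stmt3_general {H : Type*} [NormedAddCommGroup H] [InnerProductSpace ℝ H] [CompleteSpace H]
    (L : H →L[ℝ] H) (hL : IsSelfAdjoint L)
    (σ₀ : ℝ) (hσ₀ : 0 < σ₀)
    (hgap : ∀ f : H, (∀ g : H, L g = 0 → ⟪f, g⟫ = 0) → σ₀ * ‖f‖ ^ 2 ≤ ⟪f, L f⟫)
    -- `P` is the orthogonal projection onto `ker L`:
    (P : H →L[ℝ] H)
    (hPker : ∀ f : H, L (P f) = 0)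
    (hPorth : ∀ f g : H, L g = 0 → ⟪f - P f, g⟫ = 0)
    -- the forcing `g` is continuous on `[0, ∞)` and decays exponentially:
    (g : ℝ → H) (hgcont : ContinuousOn g (Ici (0:ℝ)))
    (C σ : ℝ) (hσ : 0 < σ)
    (hgdecay : ∀ τ : ℝ, 0 ≤ τ → ‖g τ‖ ≤ C * Real.exp (-σ * τ)) :
    -- existence of an initial datum with decaying solution:
    (∃ φ₁ : H, ∃ f : ℝ → H, f 0 = φ₁ ∧
      (∀ τ : ℝ, 0 ≤ τ → HasDerivWithinAt f (g τ - L (f τ)) (Ici (0:ℝ)) τ) ∧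
      Tendsto f atTop (nhds (0 : H))) ∧
    -- characterization: the solution tends to `0` iff `P φ₁ = -∫₀^∞ P (g τ) dτ`:
    (∀ φ₁ : H, ∀ f : ℝ → H, f 0 = φ₁ →
      (∀ τ : ℝ, 0 ≤ τ → HasDerivWithinAt f (g τ - L (f τ)) (Ici (0:ℝ)) τ) →
      (Tendsto f atTop (nhds (0 : H)) ↔
        P φ₁ = -∫ τ in Ici (0:ℝ), P (g τ))) := by
  have hPg : IntegrableOn (fun τ => P (g τ)) (Ici 0) :=
    P.integrable_comp (integrableOn_Ici_of_norm_le_exp hgcont hσ hgdecay)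
  set I := ∫ τ in Ici (0:ℝ), P (g τ)
  refine ⟨?_, fun φ₁ f hf0 hf => hf0 ▸
    tendsto_solution_iff hL hσ₀ hgap hPker hPorth hgcont hσ hgdecay hf⟩
  have hg' : Continuous fun τ => g (max τ 0) :=
    hgcont.comp_continuous (continuous_id.max continuous_const) fun τ => le_max_right τ 0
  set f : ℝ → H := fun t =>
    NormedSpace.exp (t • -L) (-I + ∫ s in (0:ℝ)..t, NormedSpace.exp (s • L) (g (max s 0)))
  have hf : ∀ τ, 0 ≤ τ → HasDerivWithinAt f (g τ - L (f τ)) (Ici 0) τ := fun τ hτ => by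
    have h := (hasDerivAt_duhamel L hg' (-I) τ).hasDerivWithinAt (s := Ici 0)
    rwa [max_eq_left hτ] at h
  have hf0 : f 0 = -I := by simp [f]
  have hPI : P (-I) = -I := by
    rw [map_neg, ← P.integral_comp_comm hPg]
    simp_rw [proj_ker_proj_ker hPker hPorth]
    rfl
  exact ⟨-I, f, hf0, hf,
    (tendsto_solution_iff hL hσ₀ hgap hPker hPorth hgcont hσ hgdecay hf).2 (by rw [hf0, hPI])⟩

/-- For the forced initial-layer equation `f' + L f = g` with exponentially decaying
forcing `g`, there is an initial datum `φ₁` whose solution tends to `0` at infinity;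
moreover a solution tends to `0` if and only if `P φ₁ = -∫₀^∞ P g(τ) dτ`, where `P` is the
orthogonal projection onto `ker L`. -/
theorem stmt3 {H : Type*} [NormedAddCommGroup H] [InnerProductSpace ℝ H] [CompleteSpace H]
    (L : H →L[ℝ] H) (hL : IsSelfAdjoint L)
    (hpos : ∀ f : H, 0 ≤ ⟪f, L f⟫)
    (σ₀ : ℝ) (hσ₀ : 0 < σ₀)
    (hgap : ∀ f : H, (∀ g : H, L g = 0 → ⟪f, g⟫ = 0) → σ₀ * ‖f‖ ^ 2 ≤ ⟪f, L f⟫)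
    -- `P` is the orthogonal projection onto `ker L`:
    (P : H →L[ℝ] H)
    (hPker : ∀ f : H, L (P f) = 0)
    (hPid : ∀ f : H, L f = 0 → P f = f)
    (hPorth : ∀ f g : H, L g = 0 → ⟪f - P f, g⟫ = 0)
    -- the forcing `g` is continuous on `[0, ∞)` and decays exponentially:
    (g : ℝ → H) (hgcont : ContinuousOn g (Ici (0:ℝ)))
    (C σ : ℝ) (hC : 0 < C) (hσ : 0 < σ)
    (hgdecay : ∀ τ : ℝ, 0 ≤ τ → ‖g τ‖ ≤ C * Real.exp (-σ * τ)) :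
    -- existence of an initial datum with decaying solution:
    (∃ φ₁ : H, ∃ f : ℝ → H, f 0 = φ₁ ∧
      (∀ τ : ℝ, 0 ≤ τ → HasDerivWithinAt f (g τ - L (f τ)) (Ici (0:ℝ)) τ) ∧
      Tendsto f atTop (nhds (0 : H))) ∧
    -- characterization: the solution tends to `0` iff `P φ₁ = -∫₀^∞ P (g τ) dτ`:
    (∀ φ₁ : H, ∀ f : ℝ → H, f 0 = φ₁ →
      (∀ τ : ℝ, 0 ≤ τ → HasDerivWithinAt f (g τ - L (f τ)) (Ici (0:ℝ)) τ) →
      (Tendsto f atTop (nhds (0 : H)) ↔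
        P φ₁ = -∫ τ in Ici (0:ℝ), P (g τ))) :=
  stmt3_general L hL σ₀ hσ₀ hgap P hPker hPorth g hgcont C σ hσ hgdecay
end

section
/- Let 𝓛 be the collision operator on L²(−1,1) with kernel κ as in the context; assume ker 𝓛 = span{1} and the spectral gap ∫_{−1}^1 f (𝓛f) dμ ≥ σ₀ ‖f − ⟨f⟩‖²_{L²(dμ)} for all f ∈ L²(−1,1), with σ₀ > 0. Let ε > 0 and let E : [0,T] × [a,b] × [−1,1] → ℝ be a C¹ solution of ε ∂_t E + μ ∂_x E + (1/ε) 𝓛 E = R + G, where R, G are continuous and R satisfies ∫_{−1}^1 R(t,x,μ) dμ = 0 for all (t,x). Then for every t ∈ [0,T]: (ε/2) ‖E(t)‖²_{L²(dx dμ)} + (σ₀/(2ε)) ∫₀^t ‖E − ⟨E⟩‖²_{L²(dx dμ)}(s) ds ≤ (ε/2) ‖E(0)‖²_{L²(dx dμ)} + (ε/(2σ₀)) ∫₀^t ‖R(s)‖²_{L²(dx dμ)} ds + ∫₀^t ‖G(s)‖_{L²(dx dμ)} ‖E(s)‖_{L²(dx dμ)} ds + (1/2) ∫₀^t ∫₀^1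 μ E(s,a,μ)² dμ ds + (1/2) ∫₀^t ∫_{−1}^0 |μ| E(s,b,μ)² dμ ds. -/
/-!
Multiplying the equation by `E` and integrating in `μ`, the collision term `∫ E 𝓛E / ε` dominates
`σ₀ / ε ‖E - ⟨E⟩‖²` by the spectral gap. Since `R` has zero angular mean, `∫ R E = ∫ R (E - ⟨E⟩)`,
so Young's inequality lets the `R`-term absorb half of this dissipation. After integration over
`[0, t] × [a, b]`, the time-derivative term becomes the energy difference, the transport term
`∫ μ E ∂ₓE` reduces to boundary fluxes of which only the inflow parts (`μ > 0` at `a`, `μ < 0`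
at `b`) have the unfavourable sign, and the `G`-term is bounded by Cauchy–Schwarz.
-/

open MeasureTheory Set

theorem integral_mul_le_sqrt_mul_sqrt {α : Type*} [MeasurableSpace α] {ν : Measure α}
    {f g : α → ℝ} (hf : MemLp f 2 ν) (hg : MemLp g 2 ν) :
    ∫ a, f a * g a ∂ν ≤ √(∫ a, f a ^ 2 ∂ν) * √(∫ a, g a ^ 2 ∂ν) := by
  have hfg : Integrable (fun a => |f a| * |g a|) ν := by
    simpa only [Pi.mul_apply, abs_mul] using (hf.integrable_mul hg).abs
  have holder := integral_mul_le_Lp_mul_Lq_of_nonneg Real.HolderConjugate.two_two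
    (Filter.Eventually.of_forall fun a => abs_nonneg (f a))
    (Filter.Eventually.of_forall fun a => abs_nonneg (g a))
    (by rw [ENNReal.ofReal_ofNat]; exact hf.abs) (by rw [ENNReal.ofReal_ofNat]; exact hg.abs)
  simp only [Real.rpow_two, sq_abs, ← Real.sqrt_eq_rpow] at holder
  calc ∫ a, f a * g a ∂ν ≤ ∫ a, |f a| * |g a| ∂ν :=
        integral_mono (hf.integrable_mul hg) hfg fun a => (le_abs_self _).trans_eq (abs_mul _ _)
    _ ≤ _ := holder

theorem memLp_two_restrict_of_continuous {f : ℝ → ℝ} (hf : Continuous f) {K : Set ℝ}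
    (hK : IsCompact K) : MemLp f 2 (volume.restrict K) :=
  (memLp_two_iff_integrable_sq hf.aestronglyMeasurable).2
    ((hf.pow 2).continuousOn.integrableOn_compact hK)

theorem continuous_parametric_setIntegral₂ {f : ℝ → ℝ → ℝ → ℝ}
    (hf : Continuous fun p : ℝ × ℝ × ℝ => f p.1 p.2.1 p.2.2) {K : Set ℝ} (hK : IsCompact K) :
    Continuous fun q : ℝ × ℝ => ∫ μ in K, f q.1 q.2 μ :=
  continuous_parametric_integral_of_continuous (f := fun (q : ℝ × ℝ) μ => f q.1 q.2 μ)
    (by fun_prop) hK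

theorem continuous_parametric_setIntegral_setIntegral {f : ℝ → ℝ → ℝ → ℝ}
    (hf : Continuous fun p : ℝ × ℝ × ℝ => f p.1 p.2.1 p.2.2) {K L : Set ℝ} (hK : IsCompact K)
    (hL : IsCompact L) : Continuous fun s => ∫ x in K, ∫ μ in L, f s x μ :=
  continuous_parametric_integral_of_continuous (continuous_parametric_setIntegral₂ hf hL) hK

theorem setIntegral_setIntegral_swap {f : ℝ → ℝ → ℝ}
    (hf : Continuous fun q : ℝ × ℝ => f q.1 q.2) {K L : Set ℝ} (hK : IsCompact K)
    (hL : IsCompact L) : ∫ x in K, ∫ y in L, f x y = ∫ y in L, ∫ x in K, f x y := by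
  refine integral_integral_swap ?_
  rw [Measure.prod_restrict]
  exact hf.continuousOn.integrableOn_compact (hK.prod hL)

theorem setIntegral_setIntegral_add {F H : ℝ → ℝ → ℝ}
    (hF : Continuous fun q : ℝ × ℝ => F q.1 q.2) (hH : Continuous fun q : ℝ × ℝ => H q.1 q.2)
    {K L : Set ℝ} (hK : IsCompact K) (hL : IsCompact L) :
    ∫ x in K, ∫ y in L, (F x y + H x y) =
      (∫ x in K, ∫ y in L, F x y) + ∫ x in K, ∫ y in L, H x y := by
  rw [← integral_add
    ((continuous_parametric_integral_of_continuous hF hL).continuousOn.integrableOn_compact hK)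
    ((continuous_parametric_integral_of_continuous hH hL).continuousOn.integrableOn_compact hK)]
  exact setIntegral_congr_fun hK.measurableSet fun x _ => integral_add
    ((hF.uncurry_left x).continuousOn.integrableOn_compact hL)
    ((hH.uncurry_left x).continuousOn.integrableOn_compact hL)

theorem setIntegral_setIntegral_mono {F H : ℝ → ℝ → ℝ}
    (hF : Continuous fun q : ℝ × ℝ => F q.1 q.2) (hH : Continuous fun q : ℝ × ℝ => H q.1 q.2)
    {K L : Set ℝ} (hK : IsCompact K) (hL : IsCompact L) (hFH : ∀ x ∈ K, ∀ y ∈ L, F x y ≤ H x y) :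
    ∫ x in K, ∫ y in L, F x y ≤ ∫ x in K, ∫ y in L, H x y :=
  setIntegral_mono_on
    ((continuous_parametric_integral_of_continuous hF hL).continuousOn.integrableOn_compact hK)
    ((continuous_parametric_integral_of_continuous hH hL).continuousOn.integrableOn_compact hK)
    hK.measurableSet fun x hx => setIntegral_mono_on
      ((hF.uncurry_left x).continuousOn.integrableOn_compact hL)
      ((hH.uncurry_left x).continuousOn.integrableOn_compact hL)
      hL.measurableSet (hFH x hx)

theorem setIntegral_setIntegral_mul_le {F H : ℝ → ℝ → ℝ}
    (hF : Continuous fun q : ℝ × ℝ => F q.1 q.2) (hH : Continuous fun q : ℝ × ℝ => H q.1 q.2)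
    {K L : Set ℝ} (hK : IsCompact K) (hL : IsCompact L) :
    ∫ x in K, ∫ y in L, F x y * H x y ≤
      √(∫ x in K, ∫ y in L, F x y ^ 2) * √(∫ x in K, ∫ y in L, H x y ^ 2) := by
  have hnorm : ∀ {Φ : ℝ → ℝ → ℝ}, Continuous (fun q : ℝ × ℝ => Φ q.1 q.2) →
      Continuous fun x => √(∫ y in L, Φ x y ^ 2) := fun {Φ} hΦ =>
    Real.continuous_sqrt.comp (continuous_parametric_integral_of_continuous
      (f := fun x y => Φ x y ^ 2) (by fun_prop) hL)
  have hsq : ∀ (Φ : ℝ → ℝ → ℝ) x, √(∫ y in L, Φ x y ^ 2) ^ 2 = ∫ y in L, Φ x y ^ 2 :=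
    fun Φ x => Real.sq_sqrt (integral_nonneg fun _ => sq_nonneg _)
  calc ∫ x in K, ∫ y in L, F x y * H x y
      ≤ ∫ x in K, √(∫ y in L, F x y ^ 2) * √(∫ y in L, H x y ^ 2) :=
        setIntegral_mono_on
          ((continuous_parametric_integral_of_continuous (f := fun x y => F x y * H x y)
            (by fun_prop) hL).continuousOn.integrableOn_compact hK)
          (((hnorm hF).mul (hnorm hH)).continuousOn.integrableOn_compact hK) hK.measurableSet
          fun x _ => integral_mul_le_sqrt_mul_sqrt
            (memLp_two_restrict_of_continuous (hF.uncurry_left x) hL)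
            (memLp_two_restrict_of_continuous (hH.uncurry_left x) hL)
    _ ≤ √(∫ x in K, √(∫ y in L, F x y ^ 2) ^ 2) * √(∫ x in K, √(∫ y in L, H x y ^ 2) ^ 2) :=
        integral_mul_le_sqrt_mul_sqrt (memLp_two_restrict_of_continuous (hnorm hF) hK)
          (memLp_two_restrict_of_continuous (hnorm hH) hK)
    _ = _ := by simp only [hsq]

theorem setIntegral_mul_le_setIntegral_sqrt_mul_sqrt {F H : ℝ → ℝ → ℝ → ℝ}
    (hF : Continuous fun p : ℝ × ℝ × ℝ => F p.1 p.2.1 p.2.2)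
    (hH : Continuous fun p : ℝ × ℝ × ℝ => H p.1 p.2.1 p.2.2) {K L : Set ℝ} (hK : IsCompact K)
    (hL : IsCompact L) (t₀ t₁ : ℝ) :
    ∫ s in Icc t₀ t₁, ∫ x in K, ∫ μ in L, F s x μ * H s x μ ≤
      ∫ s in Icc t₀ t₁, √(∫ x in K, ∫ μ in L, F s x μ ^ 2) * √(∫ x in K, ∫ μ in L, H s x μ ^ 2) :=
  setIntegral_mono_on
    (continuous_parametric_setIntegral_setIntegral (f := fun s x μ => F s x μ * H s x μ)
      (by fun_prop) hK hL).integrableOn_Icc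
    (((continuous_parametric_setIntegral_setIntegral (f := fun s x μ => F s x μ ^ 2)
      (by fun_prop) hK hL).sqrt.mul
      (continuous_parametric_setIntegral_setIntegral (f := fun s x μ => H s x μ ^ 2)
      (by fun_prop) hK hL).sqrt).integrableOn_Icc)
    measurableSet_Icc fun s _ =>
      setIntegral_setIntegral_mul_le (by fun_prop) (by fun_prop) hK hL

theorem integral_Icc_mul_deriv_self {g g' : ℝ → ℝ} (hg : ∀ u, HasDerivAt g (g' u) u)
    (hg' : Continuous g') {c d : ℝ} (hcd : c ≤ d) :
    ∫ u in Icc c d, g u * g' u = (g d ^ 2 - g c ^ 2) / 2 := by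
  have hgc : Continuous g := continuous_iff_continuousAt.2 fun u => (hg u).continuousAt
  rw [integral_Icc_eq_integral_Ioc, ← intervalIntegral.integral_of_le hcd,
    intervalIntegral.integral_eq_sub_of_hasDerivAt (f := fun u => g u ^ 2 / 2)
      (fun u _ => ((hg u).pow 2).div_const 2 |>.congr_deriv (by ring))
      ((by fun_prop : Continuous fun u => g u * g' u).intervalIntegrable c d)]
  ring

theorem spectral_gap_energy_le {c d σ ε m : ℝ} (hσ : 0 < σ) (hε : 0 < ε) {e r q L : ℝ → ℝ}
    (he : Continuous e) (hr : Continuous r) (hq : Continuous q)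
    (hr₀ : ∫ μ in Icc c d, r μ = 0) (hL : ∀ μ ∈ Icc c d, L μ = ε * (r μ + q μ))
    (hgap : σ * ∫ μ in Icc c d, (e μ - m) ^ 2 ≤ ∫ μ in Icc c d, e μ * L μ) :
    σ / (2 * ε) * (∫ μ in Icc c d, (e μ - m) ^ 2) ≤
      ε / (2 * σ) * (∫ μ in Icc c d, r μ ^ 2) + ∫ μ in Icc c d, q μ * e μ := by
  -- `r ⟂ 1` lets the constant `m` be inserted next to `e` in the `r`-term.
  have hsplit : ∫ μ in Icc c d, e μ * L μ =
      ε * (∫ μ in Icc c d, r μ * (e μ - m)) + ε * ∫ μ in Icc c d, q μ * e μ := by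
    calc ∫ μ in Icc c d, e μ * L μ
        = ∫ μ in Icc c d, (ε * (r μ * (e μ - m)) + ε * (q μ * e μ) + ε * m * r μ) :=
          setIntegral_congr_fun measurableSet_Icc fun μ hμ => by rw [hL μ hμ]; ring
      _ = _ := by
          rw [integral_add (by apply Continuous.integrableOn_Icc; fun_prop)
              (by apply Continuous.integrableOn_Icc; fun_prop),
            integral_add (by apply Continuous.integrableOn_Icc; fun_prop)
              (by apply Continuous.integrableOn_Icc; fun_prop)]
          simp only [integral_const_mul, hr₀, mul_zero, add_zero]
  have hyoung : ∫ μ in Icc c d, r μ * (e μ - m) ≤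
      ε / (2 * σ) * (∫ μ in Icc c d, r μ ^ 2) + σ / (2 * ε) * ∫ μ in Icc c d, (e μ - m) ^ 2 := by
    rw [← integral_const_mul, ← integral_const_mul,
      ← integral_add (by apply Continuous.integrableOn_Icc; fun_prop)
        (by apply Continuous.integrableOn_Icc; fun_prop)]
    refine setIntegral_mono_on (by apply Continuous.integrableOn_Icc; fun_prop)
      (by apply Continuous.integrableOn_Icc; fun_prop) measurableSet_Icc fun μ _ => ?_
    rw [div_mul_eq_mul_div, div_mul_eq_mul_div, div_add_div _ _ (by positivity) (by positivity),
      le_div_iff₀ (by positivity)]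
    nlinarith [sq_nonneg (ε * r μ - σ * (e μ - m)), mul_pos hε hσ]
  rw [hsplit] at hgap
  have hgap' : σ / ε * ∫ μ in Icc c d, (e μ - m) ^ 2 ≤
      (∫ μ in Icc c d, r μ * (e μ - m)) + ∫ μ in Icc c d, q μ * e μ := by
    rw [div_mul_eq_mul_div, div_le_iff₀ hε]
    linarith
  have hhalf : σ / (2 * ε) * ∫ μ in Icc c d, (e μ - m) ^ 2 =
      σ / ε * (∫ μ in Icc c d, (e μ - m) ^ 2) / 2 := by ring
  linarith

theorem angular_energy_le {c d σ ε m : ℝ} (hσ : 0 < σ) (hε : 0 < ε) {e et ex r g L : ℝ → ℝ}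
    (he : Continuous e) (het : Continuous et) (hex : Continuous ex) (hr : Continuous r)
    (hg : Continuous g)
    (hpde : ∀ μ ∈ Icc c d, ε * et μ + μ * ex μ + 1 / ε * L μ = r μ + g μ)
    (hr₀ : ∫ μ in Icc c d, r μ = 0)
    (hgap : σ * ∫ μ in Icc c d, (e μ - m) ^ 2 ≤ ∫ μ in Icc c d, e μ * L μ) :
    σ / (2 * ε) * (∫ μ in Icc c d, (e μ - m) ^ 2) +
        (ε * (∫ μ in Icc c d, e μ * et μ) + ∫ μ in Icc c d, μ * (e μ * ex μ)) ≤
      ε / (2 * σ) * (∫ μ in Icc c d, r μ ^ 2) + ∫ μ in Icc c d, g μ * e μ := by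
  have hL : ∀ μ ∈ Icc c d, L μ = ε * (r μ + (g μ - ε * et μ - μ * ex μ)) := fun μ hμ => by
    have h := hpde μ hμ
    field_simp at h
    linear_combination h
  have hsplit : ∫ μ in Icc c d, (g μ - ε * et μ - μ * ex μ) * e μ =
      (∫ μ in Icc c d, g μ * e μ) -
        (ε * (∫ μ in Icc c d, e μ * et μ) + ∫ μ in Icc c d, μ * (e μ * ex μ)) := by
    rw [← integral_const_mul, ← integral_add (by apply Continuous.integrableOn_Icc; fun_prop)
        (by apply Continuous.integrableOn_Icc; fun_prop),
      ← integral_sub (by apply Continuous.integrableOn_Icc; fun_prop)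
        (by apply Continuous.integrableOn_Icc; fun_prop)]
    exact integral_congr_ae (Filter.Eventually.of_forall fun μ => by ring)
  have h := spectral_gap_energy_le hσ hε he hr (by fun_prop) hr₀ hL hgap
  rw [hsplit] at h
  linarith

theorem setIntegral_angular_energy_le {E Et Ex R G : ℝ → ℝ → ℝ → ℝ} {α β ε : ℝ}
    (hE : Continuous fun p : ℝ × ℝ × ℝ => E p.1 p.2.1 p.2.2)
    (hEt : Continuous fun p : ℝ × ℝ × ℝ => Et p.1 p.2.1 p.2.2)
    (hEx : Continuous fun p : ℝ × ℝ × ℝ => Ex p.1 p.2.1 p.2.2)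
    (hR : Continuous fun p : ℝ × ℝ × ℝ => R p.1 p.2.1 p.2.2)
    (hG : Continuous fun p : ℝ × ℝ × ℝ => G p.1 p.2.1 p.2.2)
    {K L M : Set ℝ} (hK : IsCompact K) (hL : IsCompact L) (hM : IsCompact M)
    (h : ∀ s ∈ K, ∀ x ∈ L,
      α * (∫ μ in M, (E s x μ - 1 / 2 * ∫ μ' in M, E s x μ') ^ 2) +
          (ε * (∫ μ in M, E s x μ * Et s x μ) + ∫ μ in M, μ * (E s x μ * Ex s x μ)) ≤
        β * (∫ μ in M, R s x μ ^ 2) + ∫ μ in M, G s x μ * E s x μ) :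
    α * (∫ s in K, ∫ x in L, ∫ μ in M, (E s x μ - 1 / 2 * ∫ μ' in M, E s x μ') ^ 2) +
        (ε * (∫ s in K, ∫ x in L, ∫ μ in M, E s x μ * Et s x μ) +
          ∫ s in K, ∫ x in L, ∫ μ in M, μ * (E s x μ * Ex s x μ)) ≤
      β * (∫ s in K, ∫ x in L, ∫ μ in M, R s x μ ^ 2) +
        ∫ s in K, ∫ x in L, ∫ μ in M, G s x μ * E s x μ := by
  have hmean := continuous_parametric_setIntegral₂ hE hM
  have hQ := continuous_parametric_setIntegral₂
    (f := fun s x μ => (E s x μ - 1 / 2 * ∫ μ' in M, E s x μ') ^ 2)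
    ((hE.sub (continuous_const.mul (hmean.comp
      (by fun_prop : Continuous fun p : ℝ × ℝ × ℝ => (p.1, p.2.1))))).pow 2) hM
  have hA := continuous_parametric_setIntegral₂ (f := fun s x μ => E s x μ * Et s x μ)
    (by fun_prop) hM
  have hB := continuous_parametric_setIntegral₂ (f := fun s x μ => μ * (E s x μ * Ex s x μ))
    (by fun_prop) hM
  have hS := continuous_parametric_setIntegral₂ (f := fun s x μ => R s x μ ^ 2) (by fun_prop) hM
  have hP := continuous_parametric_setIntegral₂ (f := fun s x μ => G s x μ * E s x μ)
    (by fun_prop) hM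
  have hint := setIntegral_setIntegral_mono (by fun_prop) (by fun_prop) hK hL h
  rw [setIntegral_setIntegral_add (by fun_prop) (by fun_prop) hK hL,
    setIntegral_setIntegral_add (by fun_prop) (by fun_prop) hK hL,
    setIntegral_setIntegral_add (by fun_prop) (by fun_prop) hK hL] at hint
  simpa only [integral_const_mul] using hint

theorem setIntegral_energy_time_deriv {E Et : ℝ → ℝ → ℝ → ℝ}
    (hE : Continuous fun p : ℝ × ℝ × ℝ => E p.1 p.2.1 p.2.2)
    (hEt : ∀ s x μ, HasDerivAt (fun u => E u x μ) (Et s x μ) s)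
    (hEt' : Continuous fun p : ℝ × ℝ × ℝ => Et p.1 p.2.1 p.2.2)
    {t₀ t₁ : ℝ} (ht : t₀ ≤ t₁) {K L : Set ℝ} (hK : IsCompact K) (hL : IsCompact L) :
    ∫ s in Icc t₀ t₁, ∫ x in K, ∫ μ in L, E s x μ * Et s x μ =
      ((∫ x in K, ∫ μ in L, E t₁ x μ ^ 2) - ∫ x in K, ∫ μ in L, E t₀ x μ ^ 2) / 2 := by
  have hslice : ∀ x, ∫ s in Icc t₀ t₁, ∫ μ in L, E s x μ * Et s x μ =
      ((∫ μ in L, E t₁ x μ ^ 2) - ∫ μ in L, E t₀ x μ ^ 2) / 2 := fun x => by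
    have hint : ∀ t, IntegrableOn (fun μ => E t x μ ^ 2) L := fun t =>
      (by fun_prop : Continuous fun μ => E t x μ ^ 2).continuousOn.integrableOn_compact hL
    rw [setIntegral_setIntegral_swap (f := fun s μ => E s x μ * Et s x μ) (by fun_prop)
        isCompact_Icc hL,
      setIntegral_congr_fun hL.measurableSet fun μ _ =>
        integral_Icc_mul_deriv_self (fun s => hEt s x μ) (by fun_prop) ht,
      integral_div, integral_sub (hint t₁) (hint t₀)]
  have hsq : ∀ t, Continuous fun x => ∫ μ in L, E t x μ ^ 2 := fun t =>
    (continuous_parametric_setIntegral₂ (f := fun s x μ => E s x μ ^ 2) (by fun_prop) hL).comp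
      (Continuous.prodMk_right t)
  rw [setIntegral_setIntegral_swap (f := fun s x => ∫ μ in L, E s x μ * Et s x μ)
      (continuous_parametric_setIntegral₂ (f := fun s x μ => E s x μ * Et s x μ) (by fun_prop) hL)
      isCompact_Icc hK]
  simp only [hslice]
  rw [integral_div, integral_sub ((hsq t₁).continuousOn.integrableOn_compact hK)
    ((hsq t₀).continuousOn.integrableOn_compact hK)]

theorem neg_half_inflow_le_integral {v w : ℝ → ℝ} (hv : Continuous v) (hw : Continuous w) :
    -(1 / 2) * ((∫ μ in Icc (0:ℝ) 1, μ * v μ ^ 2) + ∫ μ in Icc (-1:ℝ) 0, |μ| * w μ ^ 2) ≤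
      ∫ μ in Icc (-1:ℝ) 1, μ * ((w μ ^ 2 - v μ ^ 2) / 2) := by
  have hφ : Continuous fun μ => μ * ((w μ ^ 2 - v μ ^ 2) / 2) := by fun_prop
  rw [← Icc_union_Ioc_eq_Icc (by norm_num : (-1:ℝ) ≤ 0) zero_le_one,
    setIntegral_union (Set.disjoint_left.2 fun μ h₁ h₂ => h₂.1.not_ge h₁.2) measurableSet_Ioc
      hφ.integrableOn_Icc hφ.integrableOn_Ioc,
    ← integral_Icc_eq_integral_Ioc, mul_add, add_comm, ← integral_const_mul, ← integral_const_mul]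
  gcongr ?_ + ?_
  · refine setIntegral_mono_on (by apply Continuous.integrableOn_Icc; fun_prop)
      (by apply Continuous.integrableOn_Icc; fun_prop) measurableSet_Icc fun μ hμ => ?_
    rw [abs_of_nonpos hμ.2]
    nlinarith [mul_nonpos_iff.2 (Or.inr ⟨hμ.2, sq_nonneg (v μ)⟩)]
  · refine setIntegral_mono_on (by apply Continuous.integrableOn_Icc; fun_prop)
      (by apply Continuous.integrableOn_Icc; fun_prop) measurableSet_Icc fun μ hμ => ?_
    nlinarith [mul_nonneg hμ.1 (sq_nonneg (w μ))]

theorem neg_half_inflow_le_setIntegral_transport {u ux : ℝ → ℝ → ℝ}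
    (hu : Continuous fun q : ℝ × ℝ => u q.1 q.2)
    (hux : ∀ x μ, HasDerivAt (fun y => u y μ) (ux x μ) x)
    (hux' : Continuous fun q : ℝ × ℝ => ux q.1 q.2) {a b : ℝ} (hab : a ≤ b) :
    -(1 / 2) * ((∫ μ in Icc (0:ℝ) 1, μ * u a μ ^ 2) + ∫ μ in Icc (-1:ℝ) 0, |μ| * u b μ ^ 2) ≤
      ∫ x in Icc a b, ∫ μ in Icc (-1:ℝ) 1, μ * (u x μ * ux x μ) := by
  rw [setIntegral_setIntegral_swap (f := fun x μ => μ * (u x μ * ux x μ)) (by fun_prop)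
    isCompact_Icc isCompact_Icc]
  refine (neg_half_inflow_le_integral (by fun_prop) (by fun_prop)).trans_eq
    (setIntegral_congr_fun measurableSet_Icc fun μ _ => ?_)
  rw [integral_const_mul, integral_Icc_mul_deriv_self (fun x => hux x μ) (by fun_prop) hab]

theorem neg_half_inflow_le_setIntegral_transport₃ {E Ex : ℝ → ℝ → ℝ → ℝ}
    (hE : Continuous fun p : ℝ × ℝ × ℝ => E p.1 p.2.1 p.2.2)
    (hEx : ∀ s x μ, HasDerivAt (fun y => E s y μ) (Ex s x μ) x)
    (hEx' : Continuous fun p : ℝ × ℝ × ℝ => Ex p.1 p.2.1 p.2.2) {a b : ℝ} (hab : a ≤ b)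
    (t₀ t₁ : ℝ) :
    -(1 / 2) * ((∫ s in Icc t₀ t₁, ∫ μ in Icc (0:ℝ) 1, μ * E s a μ ^ 2) +
        ∫ s in Icc t₀ t₁, ∫ μ in Icc (-1:ℝ) 0, |μ| * E s b μ ^ 2) ≤
      ∫ s in Icc t₀ t₁, ∫ x in Icc a b, ∫ μ in Icc (-1:ℝ) 1, μ * (E s x μ * Ex s x μ) := by
  have hin_a : Continuous fun s => ∫ μ in Icc (0:ℝ) 1, μ * E s a μ ^ 2 :=
    continuous_parametric_integral_of_continuous (f := fun s μ => μ * E s a μ ^ 2)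
      (by fun_prop) isCompact_Icc
  have hin_b : Continuous fun s => ∫ μ in Icc (-1:ℝ) 0, |μ| * E s b μ ^ 2 :=
    continuous_parametric_integral_of_continuous (f := fun s μ => |μ| * E s b μ ^ 2)
      (by fun_prop) isCompact_Icc
  rw [← integral_add hin_a.integrableOn_Icc hin_b.integrableOn_Icc, ← integral_const_mul]
  exact setIntegral_mono_on (by apply Continuous.integrableOn_Icc; fun_prop)
    (continuous_parametric_setIntegral_setIntegral
      (f := fun s x μ => μ * (E s x μ * Ex s x μ)) (by fun_prop) isCompact_Icc
      isCompact_Icc).integrableOn_Icc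
    measurableSet_Icc fun s _ => neg_half_inflow_le_setIntegral_transport (u := E s)
      (by fun_prop) (hEx s) (by fun_prop) hab

theorem stmt7_general
    (κ : ℝ → ℝ → ℝ)
    -- spectral gap:
    (σ₀ : ℝ) (hσ₀ : 0 < σ₀)
    (hgap : ∀ g : ℝ → ℝ, MemLp g 2 (volume.restrict (Icc (-1:ℝ) 1)) →
      σ₀ * (∫ μ in Icc (-1:ℝ) 1, (g μ - (1/2) * ∫ μ' in Icc (-1:ℝ) 1, g μ') ^ 2) ≤
        ∫ μ in Icc (-1:ℝ) 1, g μ * (g μ - ∫ μ' in Icc (-1:ℝ) 1, κ μ μ' * g μ'))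
    (ε T a b : ℝ) (hε : 0 < ε) (hab : a < b)
    (E R G : ℝ → ℝ → ℝ → ℝ)
    (hEcont : Continuous fun p : ℝ × ℝ × ℝ => E p.1 p.2.1 p.2.2)
    (hRcont : Continuous fun p : ℝ × ℝ × ℝ => R p.1 p.2.1 p.2.2)
    (hGcont : Continuous fun p : ℝ × ℝ × ℝ => G p.1 p.2.1 p.2.2)
    (hdt : ∀ t x μ : ℝ, DifferentiableAt ℝ (fun s => E s x μ) t)
    (hdx : ∀ t x μ : ℝ, DifferentiableAt ℝ (fun y => E t y μ) x)
    (hdtcont : Continuous fun p : ℝ × ℝ × ℝ => deriv (fun s => E s p.2.1 p.2.2) p.1)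
    (hdxcont : Continuous fun p : ℝ × ℝ × ℝ => deriv (fun y => E p.1 y p.2.2) p.2.1)
    (hpde : ∀ t ∈ Icc 0 T, ∀ x ∈ Icc a b, ∀ μ ∈ Icc (-1:ℝ) 1,
      ε * deriv (fun s => E s x μ) t + μ * deriv (fun y => E t y μ) x +
        (1 / ε) * (E t x μ - ∫ μ' in Icc (-1:ℝ) 1, κ μ μ' * E t x μ') =
          R t x μ + G t x μ)
    -- `R` has zero angular average:
    (hRavg : ∀ t ∈ Icc 0 T, ∀ x ∈ Icc a b, (∫ μ in Icc (-1:ℝ) 1, R t x μ) = 0) :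
    ∀ t ∈ Icc 0 T,
      (ε / 2) * (∫ x in Icc a b, ∫ μ in Icc (-1:ℝ) 1, (E t x μ) ^ 2) +
        (σ₀ / (2 * ε)) * (∫ s in Icc 0 t, ∫ x in Icc a b, ∫ μ in Icc (-1:ℝ) 1,
          (E s x μ - (1/2) * ∫ μ' in Icc (-1:ℝ) 1, E s x μ') ^ 2) ≤
      (ε / 2) * (∫ x in Icc a b, ∫ μ in Icc (-1:ℝ) 1, (E 0 x μ) ^ 2) +
        (ε / (2 * σ₀)) * (∫ s in Icc 0 t, ∫ x in Icc a b, ∫ μ in Icc (-1:ℝ) 1,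
          (R s x μ) ^ 2) +
        (∫ s in Icc 0 t,
          Real.sqrt (∫ x in Icc a b, ∫ μ in Icc (-1:ℝ) 1, (G s x μ) ^ 2) *
            Real.sqrt (∫ x in Icc a b, ∫ μ in Icc (-1:ℝ) 1, (E s x μ) ^ 2)) +
        (1 / 2) * (∫ s in Icc 0 t, ∫ μ in Icc (0:ℝ) 1, μ * (E s a μ) ^ 2) +
        (1 / 2) * (∫ s in Icc 0 t, ∫ μ in Icc (-1:ℝ) 0, |μ| * (E s b μ) ^ 2) := by
  intro t ht
  have hdissipation := setIntegral_angular_energy_le (E := E)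
    (Et := fun s x μ => deriv (fun u => E u x μ) s) (Ex := fun s x μ => deriv (fun y => E s y μ) x)
    hEcont hdtcont hdxcont hRcont hGcont isCompact_Icc isCompact_Icc isCompact_Icc
    fun s hs x hx =>
      have hsT : s ∈ Icc 0 T := ⟨hs.1, hs.2.trans ht.2⟩
      angular_energy_le hσ₀ hε (by fun_prop)
        (hdtcont.comp (by fun_prop : Continuous fun μ => (s, x, μ)))
        (hdxcont.comp (by fun_prop : Continuous fun μ => (s, x, μ))) (by fun_prop) (by fun_prop)
        (hpde s hsT x hx) (hRavg s hsT x hx)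
        (hgap (E s x) (memLp_two_restrict_of_continuous (by fun_prop) isCompact_Icc))
  have htime := setIntegral_energy_time_deriv hEcont (fun s x μ => (hdt s x μ).hasDerivAt)
    hdtcont ht.1 (isCompact_Icc (a := a) (b := b)) (isCompact_Icc (a := (-1:ℝ)) (b := 1))
  have htransport := neg_half_inflow_le_setIntegral_transport₃ hEcont
    (fun s x μ => (hdx s x μ).hasDerivAt) hdxcont hab.le 0 t
  have hcoupling := setIntegral_mul_le_setIntegral_sqrt_mul_sqrt hGcont hEcont
    (isCompact_Icc (a := a) (b := b)) (isCompact_Icc (a := (-1:ℝ)) (b := 1)) 0 t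
  linear_combination hdissipation + hcoupling + htransport - ε * htime

/-- A priori energy inequality for the error equation
`ε ∂_t E + μ ∂_x E + (1/ε) 𝓛 E = R + G`, where `R ⟂ 1` in `μ`, using the spectral gap of the
collision operator `𝓛`. -/
theorem stmt7
    (κ : ℝ → ℝ → ℝ)
    (hκmeas : Measurable (Function.uncurry κ))
    (hκnonneg : ∀ μ ∈ Icc (-1:ℝ) 1, ∀ μ' ∈ Icc (-1:ℝ) 1, 0 ≤ κ μ μ')
    (hκsymm : ∀ μ ∈ Icc (-1:ℝ) 1, ∀ μ' ∈ Icc (-1:ℝ) 1, κ μ μ' = κ μ' μ)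
    (hκnorm : ∀ μ ∈ Icc (-1:ℝ) 1, (∫ μ' in Icc (-1:ℝ) 1, κ μ μ') = 1)
    -- `ker 𝓛 = span {1}`:
    (hker : ∀ g : ℝ → ℝ, MemLp g 2 (volume.restrict (Icc (-1:ℝ) 1)) →
      (∀ᵐ μ ∂(volume.restrict (Icc (-1:ℝ) 1)),
        g μ - (∫ μ' in Icc (-1:ℝ) 1, κ μ μ' * g μ') = 0) →
      ∃ c : ℝ, ∀ᵐ μ ∂(volume.restrict (Icc (-1:ℝ) 1)), g μ = c)
    -- spectral gap:
    (σ₀ : ℝ) (hσ₀ : 0 < σ₀)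
    (hgap : ∀ g : ℝ → ℝ, MemLp g 2 (volume.restrict (Icc (-1:ℝ) 1)) →
      σ₀ * (∫ μ in Icc (-1:ℝ) 1, (g μ - (1/2) * ∫ μ' in Icc (-1:ℝ) 1, g μ') ^ 2) ≤
        ∫ μ in Icc (-1:ℝ) 1, g μ * (g μ - ∫ μ' in Icc (-1:ℝ) 1, κ μ μ' * g μ'))
    (ε T a b : ℝ) (hε : 0 < ε) (hT : 0 < T) (hab : a < b)
    (E R G : ℝ → ℝ → ℝ → ℝ)
    (hEcont : Continuous fun p : ℝ × ℝ × ℝ => E p.1 p.2.1 p.2.2)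
    (hRcont : Continuous fun p : ℝ × ℝ × ℝ => R p.1 p.2.1 p.2.2)
    (hGcont : Continuous fun p : ℝ × ℝ × ℝ => G p.1 p.2.1 p.2.2)
    (hdt : ∀ t x μ : ℝ, DifferentiableAt ℝ (fun s => E s x μ) t)
    (hdx : ∀ t x μ : ℝ, DifferentiableAt ℝ (fun y => E t y μ) x)
    (hdtcont : Continuous fun p : ℝ × ℝ × ℝ => deriv (fun s => E s p.2.1 p.2.2) p.1)
    (hdxcont : Continuous fun p : ℝ × ℝ × ℝ => deriv (fun y => E p.1 y p.2.2) p.2.1)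
    (hpde : ∀ t ∈ Icc 0 T, ∀ x ∈ Icc a b, ∀ μ ∈ Icc (-1:ℝ) 1,
      ε * deriv (fun s => E s x μ) t + μ * deriv (fun y => E t y μ) x +
        (1 / ε) * (E t x μ - ∫ μ' in Icc (-1:ℝ) 1, κ μ μ' * E t x μ') =
          R t x μ + G t x μ)
    -- `R` has zero angular average:
    (hRavg : ∀ t ∈ Icc 0 T, ∀ x ∈ Icc a b, (∫ μ in Icc (-1:ℝ) 1, R t x μ) = 0) :
    ∀ t ∈ Icc 0 T,
      (ε / 2) * (∫ x in Icc a b, ∫ μ in Icc (-1:ℝ) 1, (E t x μ) ^ 2) +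
        (σ₀ / (2 * ε)) * (∫ s in Icc 0 t, ∫ x in Icc a b, ∫ μ in Icc (-1:ℝ) 1,
          (E s x μ - (1/2) * ∫ μ' in Icc (-1:ℝ) 1, E s x μ') ^ 2) ≤
      (ε / 2) * (∫ x in Icc a b, ∫ μ in Icc (-1:ℝ) 1, (E 0 x μ) ^ 2) +
        (ε / (2 * σ₀)) * (∫ s in Icc 0 t, ∫ x in Icc a b, ∫ μ in Icc (-1:ℝ) 1,
          (R s x μ) ^ 2) +
        (∫ s in Icc 0 t,
          Real.sqrt (∫ x in Icc a b, ∫ μ in Icc (-1:ℝ) 1, (G s x μ) ^ 2) *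
            Real.sqrt (∫ x in Icc a b, ∫ μ in Icc (-1:ℝ) 1, (E s x μ) ^ 2)) +
        (1 / 2) * (∫ s in Icc 0 t, ∫ μ in Icc (0:ℝ) 1, μ * (E s a μ) ^ 2) +
        (1 / 2) * (∫ s in Icc 0 t, ∫ μ in Icc (-1:ℝ) 0, |μ| * (E s b μ) ^ 2) :=
  stmt7_general κ σ₀ hσ₀ hgap ε T a b hε hab E R G hEcont hRcont hGcont hdt hdx hdtcont hdxcont hpde
    hRavg
end

section
/- Let a < b, θ₀ ∈ C⁴([a,b]), and let α₀, α₁, α₂, β₀, β₁, β₂ be real numbers. Then there is a constant C > 0, depending only on θ₀ and on the numbers α_m, β_m, such that for every δ ∈ (0, (b−a)/8) there exists θ̃₀ ∈ C⁴([a,b]) with: (i) ∂_x^{2m} θ̃₀(a) = α_m and ∂_x^{2m} θ̃₀(b) = β_m for m = 0, 1, 2; (ii) θ̃₀(x) = θ₀(x) for all x ∈ [a + 2δ, b − 2δ]; and (iii) ‖∂_x^{k}(θ̃₀ − θ₀)‖_{L²(a,b)} ≤ C δ^{1/2 − k} for every integer 0 ≤ k ≤ 4. -/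
/-!
Near each endpoint `c` add the boundary layer `x ↦ ∑ₘ pₘ δ^{2m} eₘ((x - c)/δ)`, where
`eₘ(u) = χ(u) u^{2m}/(2m)!` and `χ` is a smooth cutoff equal to `1` near `0` and supported in
`[-1, 1]`. Since `χ ≡ 1` near `0`, the factor `δ^{2m}` exactly compensates the rescaling and the
`2j`-th derivative of the layer at `c` is `pⱼ`; taking `pⱼ` to be the defect of `θ₀` at `c` gives
the prescribed values, and the layer vanishes at distance `≥ δ` from `c`. Its `k`-th derivative
is `δ^{-k}` times a combination of derivatives of the fixed profiles `eₘ` with coefficients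
bounded uniformly in `δ`, and it lives on a set of measure `O(δ)`; hence its `L²` norm is
`O(δ^{1/2 - k})`.
-/

open MeasureTheory Set
open scoped ContDiff

noncomputable section

lemma iteratedDeriv_eq_zero_of_notMem_tsupport {f : ℝ → ℝ} {x : ℝ} (hx : x ∉ tsupport f)
    (k : ℕ) : iteratedDeriv k f x = 0 := by
  have : iteratedFDeriv ℝ k f x = 0 :=
    Function.notMem_support.mp fun h => hx (support_iteratedFDeriv_subset k h)
  simp [iteratedDeriv_eq_iteratedFDeriv, this]

lemma exists_abs_iteratedDeriv_le_of_hasCompactSupport {f : ℝ → ℝ} {k : ℕ}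
    (hs : HasCompactSupport f) (hf : ContDiff ℝ k f) : ∃ M, ∀ x, |iteratedDeriv k f x| ≤ M :=
  (hf.continuous_iteratedDeriv k le_rfl).bounded_above_of_compact_support <|
    hs.mono' fun _ hx => by_contra fun h => hx (iteratedDeriv_eq_zero_of_notMem_tsupport h k)

lemma iteratedDeriv_comp_mul_sub {f : ℝ → ℝ} {k : ℕ} (hf : ContDiff ℝ k f) (r c x : ℝ) :
    iteratedDeriv k (fun y => f (r * (y - c))) x = r ^ k * iteratedDeriv k f (r * (x - c)) := by
  rw [iteratedDeriv_comp_sub_const k (fun y => f (r * y)) c, iteratedDeriv_comp_const_mul hf]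

lemma integral_Icc_sq_le_of_eq_zero_inside {g : ℝ → ℝ} {a b ε B : ℝ} (hg : Continuous g)
    (hε : 0 ≤ ε) (hab : a + ε ≤ b - ε) (hB : ∀ x, |g x| ≤ B)
    (hzero : ∀ x ∈ Icc (a + ε) (b - ε), g x = 0) :
    ∫ x in Icc a b, g x ^ 2 ≤ 2 * ε * B ^ 2 := by
  have hi : ∀ u v, IntervalIntegrable (fun x => g x ^ 2) volume u v :=
    fun u v => (hg.pow 2).intervalIntegrable u v
  have hend : ∀ u, |∫ x in u..u + ε, g x ^ 2| ≤ B ^ 2 * ε := fun u => by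
    simpa [abs_of_nonneg hε] using intervalIntegral.norm_integral_le_of_norm_le_const
      (a := u) (b := u + ε) (f := fun x => g x ^ 2) fun x _ => by
        simpa only [Real.norm_eq_abs, abs_pow, sq_abs] using
          pow_le_pow_left₀ (abs_nonneg _) (hB x) 2
  have hmid : ∫ x in (a + ε)..(b - ε), g x ^ 2 = 0 := by
    rw [← intervalIntegral.integral_zero]
    refine intervalIntegral.integral_congr fun x hx => ?_
    rw [uIcc_of_le hab] at hx
    simp [hzero x hx]
  rw [integral_Icc_eq_integral_Ioc, ← intervalIntegral.integral_of_le (by linarith),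
    ← intervalIntegral.integral_add_adjacent_intervals (hi a (a + ε)) (hi (a + ε) b),
    ← intervalIntegral.integral_add_adjacent_intervals (hi (a + ε) (b - ε)) (hi (b - ε) b), hmid]
  have hl := hend a
  have hr := hend (b - ε)
  rw [sub_add_cancel] at hr
  linarith [le_abs_self (∫ x in a..a + ε, g x ^ 2), le_abs_self (∫ x in (b - ε)..b, g x ^ 2)]

lemma inv_pow_mul_sqrt_eq_rpow (δ : ℝ) (hδ : 0 < δ) (k : ℕ) :
    δ⁻¹ ^ k * √δ = δ ^ ((1 : ℝ) / 2 - k) := by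
  rw [Real.rpow_sub hδ, Real.rpow_natCast, Real.sqrt_eq_rpow, inv_pow, inv_mul_eq_div]

def cutoff : ContDiffBump (0 : ℝ) := ⟨1 / 2, 1, by norm_num, by norm_num⟩

def evenBump (m : ℕ) (u : ℝ) : ℝ := cutoff u * (u ^ (2 * m) / (2 * m).factorial)

lemma contDiff_evenBump (m : ℕ) : ContDiff ℝ ∞ (evenBump m) :=
  cutoff.contDiff.mul ((contDiff_id.pow _).div_const _)

lemma hasCompactSupport_evenBump (m : ℕ) : HasCompactSupport (evenBump m) :=
  cutoff.hasCompactSupport.mul_right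

lemma iteratedDeriv_evenBump_eq_zero (m k : ℕ) {u : ℝ} (hu : 1 < |u|) :
    iteratedDeriv k (evenBump m) u = 0 := by
  refine iteratedDeriv_eq_zero_of_notMem_tsupport (fun h => ?_) k
  have := cutoff.tsupport_eq ▸ tsupport_mul_subset_left h
  simp [cutoff] at this
  linarith

lemma iteratedDeriv_evenBump_zero (m k : ℕ) :
    iteratedDeriv k (evenBump m) 0 = if k = 2 * m then 1 else 0 := by
  have : evenBump m =ᶠ[nhds 0] fun u => u ^ (2 * m) / (2 * m).factorial := by
    filter_upwards [cutoff.eventuallyEq_one] with u hu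
    simp [evenBump, hu]
  rw [this.iteratedDeriv_eq, iteratedDeriv_div_const, iteratedDeriv_fun_pow_zero]
  split_ifs with h
  · subst h; exact div_self (by positivity)
  · simp

lemma exists_abs_iteratedDeriv_evenBump_le (n K : ℕ) :
    ∃ M, ∀ m < n, ∀ k ≤ K, ∀ u, |iteratedDeriv k (evenBump m) u| ≤ M := by
  choose B hB using fun m k => exists_abs_iteratedDeriv_le_of_hasCompactSupport
    (hasCompactSupport_evenBump m) (contDiff_infty.mp (contDiff_evenBump m) k)
  obtain ⟨M, hM⟩ := ((Finset.range n ×ˢ Finset.range (K + 1)).image fun i => B i.1 i.2).exists_le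
  refine ⟨M, fun m hm k hk u => (hB m k u).trans
    (hM _ (Finset.mem_image_of_mem (fun i => B i.1 i.2) (a := (m, k)) ?_))⟩
  simp only [Finset.mem_product, Finset.mem_range]
  omega

def boundaryLayer {n : ℕ} (δ c : ℝ) (p : Fin n → ℝ) (x : ℝ) : ℝ :=
  ∑ m : Fin n, p m * δ ^ (2 * (m : ℕ)) * evenBump m (δ⁻¹ * (x - c))

section boundaryLayer

variable {n : ℕ} {δ c : ℝ} {p : Fin n → ℝ}

lemma contDiff_boundaryLayer : ContDiff ℝ ∞ (boundaryLayer δ c p) :=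
  ContDiff.sum fun m _ => contDiff_const.mul <|
    (contDiff_evenBump m).comp (contDiff_const.mul (contDiff_id.sub contDiff_const))

lemma iteratedDeriv_boundaryLayer (k : ℕ) (x : ℝ) :
    iteratedDeriv k (boundaryLayer δ c p) x =
      δ⁻¹ ^ k * ∑ m : Fin n, p m * δ ^ (2 * (m : ℕ)) *
        iteratedDeriv k (evenBump m) (δ⁻¹ * (x - c)) := by
  have hterm : ∀ m : Fin n, ContDiff ℝ k fun y => evenBump m (δ⁻¹ * (y - c)) := fun m =>
    (contDiff_infty.mp (contDiff_evenBump m) k).comp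
      (contDiff_const.mul (contDiff_id.sub contDiff_const))
  unfold boundaryLayer
  rw [iteratedDeriv_fun_sum fun m _ => (contDiff_const.mul (hterm m)).contDiffAt,
    Finset.mul_sum]
  refine Finset.sum_congr rfl fun m _ => ?_
  rw [iteratedDeriv_const_mul_field, iteratedDeriv_comp_mul_sub
    (contDiff_infty.mp (contDiff_evenBump m) k)]
  ring

lemma iteratedDeriv_boundaryLayer_center (hδ : δ ≠ 0) (j : Fin n) :
    iteratedDeriv (2 * j) (boundaryLayer δ c p) c = p j := by
  simp_rw [iteratedDeriv_boundaryLayer, sub_self, mul_zero, iteratedDeriv_evenBump_zero,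
    mul_ite, mul_one, mul_zero, Nat.mul_left_cancel_iff two_pos, Fin.val_inj,
    Finset.sum_ite_eq, Finset.mem_univ, if_true]
  rw [mul_comm (p j), ← mul_assoc, ← mul_pow, inv_mul_cancel₀ hδ, one_pow, one_mul]

lemma iteratedDeriv_boundaryLayer_eq_zero (hδ : 0 < δ) {x : ℝ} (hx : δ < |x - c|) (k : ℕ) :
    iteratedDeriv k (boundaryLayer δ c p) x = 0 := by
  have hu : 1 < |δ⁻¹ * (x - c)| := by
    rwa [abs_mul, abs_inv, abs_of_pos hδ, ← div_eq_inv_mul, one_lt_div hδ]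
  simp [iteratedDeriv_boundaryLayer, iteratedDeriv_evenBump_eq_zero _ _ hu]

lemma abs_iteratedDeriv_boundaryLayer_le {k : ℕ} {M R : ℝ}
    (hM : ∀ m : Fin n, ∀ u, |iteratedDeriv k (evenBump m) u| ≤ M) (hδ : 0 < δ) (hR : 1 ≤ R)
    (hδR : δ ≤ R) (x : ℝ) :
    |iteratedDeriv k (boundaryLayer δ c p) x| ≤ δ⁻¹ ^ k * (R ^ (2 * n) * M * ∑ m, |p m|) := by
  rw [iteratedDeriv_boundaryLayer, abs_mul, abs_of_pos (by positivity), Finset.mul_sum]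
  gcongr
  refine (Finset.abs_sum_le_sum_abs _ _).trans (Finset.sum_le_sum fun m _ => ?_)
  have hδm : δ ^ (2 * (m : ℕ)) ≤ R ^ (2 * n) :=
    (pow_le_pow_left₀ hδ.le hδR _).trans (pow_le_pow_right₀ hR (by omega))
  rw [abs_mul, abs_mul, abs_of_nonneg (by positivity : (0 : ℝ) ≤ δ ^ (2 * (m : ℕ)))]
  calc |p m| * δ ^ (2 * (m : ℕ)) * |iteratedDeriv k (evenBump m) (δ⁻¹ * (x - c))|
      ≤ |p m| * R ^ (2 * n) * M := by gcongr; exact hM m _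
    _ = R ^ (2 * n) * M * |p m| := by ring

end boundaryLayer

def endpointCorrection {n : ℕ} (δ a b : ℝ) (p q : Fin n → ℝ) : ℝ → ℝ :=
  boundaryLayer δ a p + boundaryLayer δ b q

section endpointCorrection

variable {n : ℕ} {δ a b : ℝ} {p q : Fin n → ℝ}

lemma contDiff_endpointCorrection : ContDiff ℝ ∞ (endpointCorrection δ a b p q) :=
  contDiff_boundaryLayer.add contDiff_boundaryLayer

lemma iteratedDeriv_endpointCorrection (k : ℕ) (x : ℝ) :
    iteratedDeriv k (endpointCorrection δ a b p q) x =
      iteratedDeriv k (boundaryLayer δ a p) x + iteratedDeriv k (boundaryLayer δ b q) x :=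
  iteratedDeriv_add (contDiff_infty.mp contDiff_boundaryLayer k).contDiffAt
    (contDiff_infty.mp contDiff_boundaryLayer k).contDiffAt

lemma iteratedDeriv_endpointCorrection_left (hδ : 0 < δ) (hab : δ < b - a) (j : Fin n) :
    iteratedDeriv (2 * j) (endpointCorrection δ a b p q) a = p j := by
  rw [iteratedDeriv_endpointCorrection, iteratedDeriv_boundaryLayer_center hδ.ne',
    iteratedDeriv_boundaryLayer_eq_zero hδ
      (by rw [abs_sub_comm, abs_of_pos (by linarith)]; exact hab), add_zero]

lemma iteratedDeriv_endpointCorrection_right (hδ : 0 < δ) (hab : δ < b - a) (j : Fin n) :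
    iteratedDeriv (2 * j) (endpointCorrection δ a b p q) b = q j := by
  rw [iteratedDeriv_endpointCorrection, iteratedDeriv_boundaryLayer_center hδ.ne',
    iteratedDeriv_boundaryLayer_eq_zero hδ (by rw [abs_of_pos (by linarith)]; exact hab),
    zero_add]

lemma iteratedDeriv_endpointCorrection_eq_zero (hδ : 0 < δ) {x : ℝ}
    (hx : x ∈ Icc (a + 2 * δ) (b - 2 * δ)) (k : ℕ) :
    iteratedDeriv k (endpointCorrection δ a b p q) x = 0 := by
  rw [iteratedDeriv_endpointCorrection, iteratedDeriv_boundaryLayer_eq_zero hδ,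
    iteratedDeriv_boundaryLayer_eq_zero hδ, add_zero]
  · rw [abs_of_neg (by linarith [hx.2])]; linarith [hx.2]
  · rw [abs_of_pos (by linarith [hx.1])]; linarith [hx.1]

lemma sqrt_integral_sq_iteratedDeriv_endpointCorrection_le {k : ℕ} {M R : ℝ}
    (hM : ∀ m : Fin n, ∀ u, |iteratedDeriv k (evenBump m) u| ≤ M) (hδ : 0 < δ)
    (hab : 4 * δ ≤ b - a) (hR : 1 ≤ R) (hδR : δ ≤ R) :
    √(∫ x in Icc a b, iteratedDeriv k (endpointCorrection δ a b p q) x ^ 2) ≤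
      2 * (R ^ (2 * n) * M * (∑ m, |p m| + ∑ m, |q m|)) * δ ^ ((1 : ℝ) / 2 - k) := by
  set K := R ^ (2 * n) * M * (∑ m, |p m| + ∑ m, |q m|)
  have hB : ∀ x, |iteratedDeriv k (endpointCorrection δ a b p q) x| ≤ δ⁻¹ ^ k * K := fun x => by
    rw [iteratedDeriv_endpointCorrection]
    refine (abs_add_le _ _).trans ((add_le_add
      (abs_iteratedDeriv_boundaryLayer_le hM hδ hR hδR x)
      (abs_iteratedDeriv_boundaryLayer_le hM hδ hR hδR x)).trans_eq ?_)
    ring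
  have hK : 0 ≤ δ⁻¹ ^ k * K := (abs_nonneg _).trans (hB a)
  have hint := integral_Icc_sq_le_of_eq_zero_inside (ε := 2 * δ)
    (contDiff_endpointCorrection.continuous_iteratedDeriv k (mod_cast le_top)) (by positivity)
    (by linarith) hB fun x hx => iteratedDeriv_endpointCorrection_eq_zero hδ hx k
  calc √(∫ x in Icc a b, iteratedDeriv k (endpointCorrection δ a b p q) x ^ 2)
      ≤ √((2 * (δ⁻¹ ^ k * K)) ^ 2 * δ) := Real.sqrt_le_sqrt (by linarith)
    _ = 2 * K * (δ⁻¹ ^ k * √δ) := by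
      rw [Real.sqrt_mul (sq_nonneg _), Real.sqrt_sq (by positivity)]; ring
    _ = 2 * K * δ ^ ((1 : ℝ) / 2 - k) := by rw [inv_pow_mul_sqrt_eq_rpow δ hδ k]

end endpointCorrection

theorem stmt16_general (a b : ℝ)
    (θ₀ : ℝ → ℝ) (hθ₀ : ContDiff ℝ 4 θ₀)
    (α₀ α₁ α₂ β₀ β₁ β₂ : ℝ) :
    ∃ C : ℝ, 0 < C ∧
      ∀ δ : ℝ, δ ∈ Ioo (0:ℝ) ((b - a) / 8) →
        ∃ θt : ℝ → ℝ, ContDiff ℝ 4 θt ∧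
          -- (i) prescribed even-order derivatives at the endpoints:
          θt a = α₀ ∧ iteratedDeriv 2 θt a = α₁ ∧ iteratedDeriv 4 θt a = α₂ ∧
          θt b = β₀ ∧ iteratedDeriv 2 θt b = β₁ ∧ iteratedDeriv 4 θt b = β₂ ∧
          -- (ii) agreement with `θ₀` away from the endpoints:
          (∀ x ∈ Icc (a + 2 * δ) (b - 2 * δ), θt x = θ₀ x) ∧
          -- (iii) blow-up rate of the modification:
          (∀ k : ℕ, k ≤ 4 →
            Real.sqrt (∫ x in Icc a b,
                (iteratedDeriv k θt x - iteratedDeriv k θ₀ x) ^ 2) ≤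
              C * δ ^ ((1:ℝ)/2 - (k:ℝ))) := by
  obtain ⟨M, hM⟩ := exists_abs_iteratedDeriv_evenBump_le 3 4
  set p : Fin 3 → ℝ := fun j => ![α₀, α₁, α₂] j - iteratedDeriv (2 * j) θ₀ a
  set q : Fin 3 → ℝ := fun j => ![β₀, β₁, β₂] j - iteratedDeriv (2 * j) θ₀ b
  set K := max 1 (b - a) ^ (2 * 3) * M * (∑ m, |p m| + ∑ m, |q m|)
  have hK : 0 ≤ K := by
    have := (abs_nonneg _).trans (hM 0 three_pos 0 (Nat.zero_le _) 0)
    positivity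
  refine ⟨2 * K + 1, by positivity, fun δ ⟨hδ, hδ8⟩ => ?_⟩
  set θt := θ₀ + endpointCorrection δ a b p q
  have hderiv : ∀ k ≤ 4, ∀ x, iteratedDeriv k θt x =
      iteratedDeriv k θ₀ x + iteratedDeriv k (endpointCorrection δ a b p q) x :=
    fun k hk x => iteratedDeriv_add (hθ₀.of_le (mod_cast hk)).contDiffAt
      (contDiff_infty.mp contDiff_endpointCorrection k).contDiffAt
  have hleft (j : Fin 3) : iteratedDeriv (2 * j) θt a = ![α₀, α₁, α₂] j := by
    rw [hderiv _ (by omega), iteratedDeriv_endpointCorrection_left hδ (by linarith)]; ring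
  have hright (j : Fin 3) : iteratedDeriv (2 * j) θt b = ![β₀, β₁, β₂] j := by
    rw [hderiv _ (by omega), iteratedDeriv_endpointCorrection_right hδ (by linarith)]; ring
  refine ⟨θt, hθ₀.add (contDiff_infty.mp contDiff_endpointCorrection 4),
    by simpa using hleft 0, by simpa using hleft 1, by simpa using hleft 2,
    by simpa using hright 0, by simpa using hright 1, by simpa using hright 2,
    fun x hx => by
      simpa [θt] using iteratedDeriv_endpointCorrection_eq_zero (p := p) (q := q) hδ hx 0,
    fun k hk => ?_⟩
  simp_rw [hderiv k hk, add_sub_cancel_left]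
  refine (sqrt_integral_sq_iteratedDeriv_endpointCorrection_le (R := max 1 (b - a))
    (fun m => hM m m.isLt k hk) hδ (by linarith) (le_max_left _ _)
    (le_max_of_le_right (by linarith))).trans ?_
  gcongr
  linarith

/-- Construction of a compatible modification of the initial datum: given `θ₀ ∈ C⁴([a,b])`
and target endpoint values `α₀, α₁, α₂, β₀, β₁, β₂` for the even-order derivatives, there is
a constant `C` (depending only on `θ₀` and these values) such that for every small `δ`
there exists `θ̃₀ ∈ C⁴` matching the endpoint values, agreeing with `θ₀` on
`[a + 2δ, b - 2δ]`, and with `‖∂_x^k (θ̃₀ - θ₀)‖_{L²(a,b)} ≤ C δ^{1/2 - k}` for `k ≤ 4`. -/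
theorem stmt16 (a b : ℝ) (hab : a < b)
    (θ₀ : ℝ → ℝ) (hθ₀ : ContDiff ℝ 4 θ₀)
    (α₀ α₁ α₂ β₀ β₁ β₂ : ℝ) :
    ∃ C : ℝ, 0 < C ∧
      ∀ δ : ℝ, δ ∈ Ioo (0:ℝ) ((b - a) / 8) →
        ∃ θt : ℝ → ℝ, ContDiff ℝ 4 θt ∧
          -- (i) prescribed even-order derivatives at the endpoints:
          θt a = α₀ ∧ iteratedDeriv 2 θt a = α₁ ∧ iteratedDeriv 4 θt a = α₂ ∧
          θt b = β₀ ∧ iteratedDeriv 2 θt b = β₁ ∧ iteratedDeriv 4 θt b = β₂ ∧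
          -- (ii) agreement with `θ₀` away from the endpoints:
          (∀ x ∈ Icc (a + 2 * δ) (b - 2 * δ), θt x = θ₀ x) ∧
          -- (iii) blow-up rate of the modification:
          (∀ k : ℕ, k ≤ 4 →
            Real.sqrt (∫ x in Icc a b,
                (iteratedDeriv k θt x - iteratedDeriv k θ₀ x) ^ 2) ≤
              C * δ ^ ((1:ℝ)/2 - (k:ℝ))) :=
  stmt16_general a b θ₀ hθ₀ α₀ α₁ α₂ β₀ β₁ β₂
end
end
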